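/- Let H, S be Hermitian with S positive definite, z ∈ ℂ with nonzero imaginary part. Then H - zS is invertible, and for u = (H - zS)^{-1}b the S-norm bound ‖u‖_S ≤ ‖Ψ*b‖_2 / min_i |λ_i - z| holds, where λ_i are the generalized eigenvalues and Ψ satisfies Ψ*HΨ = Λ, Ψ*SΨ = I. -/

import Mathlib

open Matrix
open scoped ComplexOrder

/-!
Congruence by `Ψ` turns the pencil into `Ψᴴ (H - zS) Ψ = diag(λᵢ - z)`, whose entries are nonzero
because `λᵢ` is real and `Im z ≠ 0`; hence `(H - zS)⁻¹ = Ψ diag(λᵢ - z)⁻¹ Ψᴴ`. Writing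
`u = Ψ w` with `w = diag(λᵢ - z)⁻¹ Ψᴴ b`, the relation `Ψᴴ S Ψ = 1` makes `‖u‖_S` the Euclidean
norm of `w`, and each entry of `w` is at most `|(Ψᴴ b)ᵢ| / minᵢ |λᵢ - z|` in modulus.
-/

namespace Matrix

variable {n : Type*} [Fintype n]

theorem re_star_dotProduct_self {𝕜 : Type*} [RCLike 𝕜] (v : n → 𝕜) :
    RCLike.re (star v ⬝ᵥ v) = ∑ i, ‖v i‖ ^ 2 := by
  simp only [dotProduct, Pi.star_apply, RCLike.star_def, RCLike.conj_mul, map_sum]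
  norm_cast

variable [DecidableEq n]

theorem conjTranspose_mul_sub_smul_mul {R : Type*} [CommRing R] [StarRing R]
    {H S P : Matrix n n R} {d : n → R} (hdiag : Pᴴ * H * P = diagonal d)
    (horth : Pᴴ * S * P = 1) (z : R) :
    Pᴴ * (H - z • S) * P = diagonal fun i => d i - z := by
  rw [Matrix.mul_sub, Matrix.sub_mul, Matrix.mul_smul, Matrix.smul_mul, hdiag, horth,
    smul_one_eq_diagonal, diagonal_sub]

theorem mul_diagonal_inv_mul_conjTranspose_mul_eq_one {K : Type*} [Field K] [StarRing K]
    {A P : Matrix n n K} {e : n → K} (hP : IsUnit P.det) (he : ∀ i, e i ≠ 0)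
    (h : Pᴴ * A * P = diagonal e) :
    P * diagonal e⁻¹ * Pᴴ * A = 1 := by
  have hA : Pᴴ * A = diagonal e * P⁻¹ := by
    rw [← h, Matrix.mul_assoc _ P, mul_nonsing_inv _ hP, Matrix.mul_one]
  have hdiag : diagonal e⁻¹ * diagonal e = 1 := by
    rw [diagonal_mul_diagonal, ← diagonal_one]
    exact congrArg diagonal (funext fun i => inv_mul_cancel₀ (he i))
  rw [Matrix.mul_assoc, hA, ← Matrix.mul_assoc, Matrix.mul_assoc P, hdiag, Matrix.mul_one,
    mul_nonsing_inv _ hP]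

theorem star_mulVec_dotProduct_mulVec_mulVec {R : Type*} [CommSemiring R] [StarRing R]
    {S P : Matrix n n R} (horth : Pᴴ * S * P = 1) (w : n → R) :
    star (P *ᵥ w) ⬝ᵥ S *ᵥ (P *ᵥ w) = star w ⬝ᵥ w := by
  rw [star_mulVec, mulVec_mulVec, dotProduct_mulVec, vecMul_vecMul, ← Matrix.mul_assoc, horth,
    vecMul_one]

theorem sqrt_re_star_dotProduct_diagonal_inv_mulVec_le {𝕜 : Type*} [RCLike 𝕜] {e : n → 𝕜}
    {m : ℝ} (hm : 0 < m) (hle : ∀ i, m ≤ ‖e i‖) (c : n → 𝕜) :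
    √(RCLike.re (star (diagonal e⁻¹ *ᵥ c) ⬝ᵥ diagonal e⁻¹ *ᵥ c))
      ≤ √(RCLike.re (star c ⬝ᵥ c)) / m := by
  have hsum : ∑ i, ‖(e i)⁻¹ * c i‖ ^ 2 ≤ (∑ i, ‖c i‖ ^ 2) / m ^ 2 := by
    rw [Finset.sum_div]
    refine Finset.sum_le_sum fun i _ => ?_
    rw [norm_mul, norm_inv, mul_pow, inv_pow, inv_mul_eq_div]
    gcongr
    exact hle i
  rw [re_star_dotProduct_self, re_star_dotProduct_self, ← Real.sqrt_sq hm.le,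
    ← Real.sqrt_div' _ (sq_nonneg m)]
  exact Real.sqrt_le_sqrt (by simpa only [mulVec_diagonal, Pi.inv_apply] using hsum)

end Matrix

theorem Complex.ofReal_sub_ne_zero {z : ℂ} (hz : z.im ≠ 0) (x : ℝ) : (x : ℂ) - z ≠ 0 := by
  intro h
  apply hz
  simpa using congrArg Complex.im h

theorem shifted_solution_S_norm_bound_general {N : ℕ} (hN : 0 < N)
    (H S Ψ : Matrix (Fin N) (Fin N) ℂ)
    (hΨ : IsUnit Ψ.det)
    (d : Fin N → ℝ)
    (hdiag : Ψᴴ * H * Ψ = Matrix.diagonal fun i => (d i : ℂ))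
    (horth : Ψᴴ * S * Ψ = 1)
    (z : ℂ) (hz : z.im ≠ 0) (b : Fin N → ℂ) :
    IsUnit (H - z • S).det ∧
      Real.sqrt (star ((H - z • S)⁻¹.mulVec b) ⬝ᵥ
          S.mulVec ((H - z • S)⁻¹.mulVec b)).re
        ≤ Real.sqrt (star (Ψᴴ.mulVec b) ⬝ᵥ (Ψᴴ.mulVec b)).re /
            Finset.univ.inf' ⟨⟨0, hN⟩, Finset.mem_univ _⟩
              (fun i => ‖(d i : ℂ) - z‖) := by
  have he : ∀ i, (d i : ℂ) - z ≠ 0 := fun i => Complex.ofReal_sub_ne_zero hz (d i)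
  have hleft := mul_diagonal_inv_mul_conjTranspose_mul_eq_one hΨ he
    (conjTranspose_mul_sub_smul_mul hdiag horth z)
  refine ⟨isUnit_det_of_left_inverse hleft, ?_⟩
  have hm : 0 < Finset.univ.inf' ⟨⟨0, hN⟩, Finset.mem_univ _⟩ (fun i => ‖(d i : ℂ) - z‖) :=
    (Finset.lt_inf'_iff _).2 fun i _ => norm_pos_iff.2 (he i)
  rw [inv_eq_left_inv hleft, ← mulVec_mulVec, ← mulVec_mulVec,
    star_mulVec_dotProduct_mulVec_mulVec horth]
  exact sqrt_re_star_dotProduct_diagonal_inv_mulVec_le hm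
    (fun i => Finset.inf'_le _ (Finset.mem_univ i)) _

/-- For a Hermitian pencil `(H, S)` with `S` positive definite and a shift `z` with
nonzero imaginary part, `H - zS` is invertible and the solution `u = (H - zS)⁻¹ b`
satisfies `‖u‖_S ≤ ‖Ψᴴ b‖₂ / min_i |λ_i - z|`. -/
theorem shifted_solution_S_norm_bound {N : ℕ} (hN : 0 < N)
    (H S Ψ : Matrix (Fin N) (Fin N) ℂ)
    (hH : H.IsHermitian) (hS : S.PosDef) (hΨ : IsUnit Ψ.det)
    (d : Fin N → ℝ)
    (hdiag : Ψᴴ * H * Ψ = Matrix.diagonal fun i => (d i : ℂ))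
    (horth : Ψᴴ * S * Ψ = 1)
    (z : ℂ) (hz : z.im ≠ 0) (b : Fin N → ℂ) :
    IsUnit (H - z • S).det ∧
      Real.sqrt (star ((H - z • S)⁻¹.mulVec b) ⬝ᵥ
          S.mulVec ((H - z • S)⁻¹.mulVec b)).re
        ≤ Real.sqrt (star (Ψᴴ.mulVec b) ⬝ᵥ (Ψᴴ.mulVec b)).re /
            Finset.univ.inf' ⟨⟨0, hN⟩, Finset.mem_univ _⟩
              (fun i => ‖(d i : ℂ) - z‖) :=
  shifted_solution_S_norm_bound_general hN H S Ψ hΨ d hdiag horth z hz b
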